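/- Write $x = (x',x'') \in \mathbf{R}^{n-m} \times \mathbf{R}^m$ with $1 \le m \le n-2$, let $p \in (n-m,\infty)$ with $p > 2$, and set $\beta = (p-n+m)/(p-1)$. Then there exists $\delta_c \in (0,1)$, depending only on $n$ and $p$, such that the function $\check u(x) = (1 - |x''|^2)|x'|^{\beta} + |x'|$ satisfies $\frac{\Delta \check u\, |\nabla \check u|^2}{p-2} + \Delta_\infty \check u \ge 0$ pointwise on the open set $\{x : |x''| < 1,\ 0 < |x'| < \delta_c\}$. -/

import Mathlib

open Real Filter Set

noncomputable def pd {n : ℕ} (f : EuclideanSpace ℝ (Fin n) → ℝ) (i : Fin n)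
    (x : EuclideanSpace ℝ (Fin n)) : ℝ :=
  fderiv ℝ f x (EuclideanSpace.single i 1)

noncomputable def pd2 {n : ℕ} (f : EuclideanSpace ℝ (Fin n) → ℝ) (i j : Fin n)
    (x : EuclideanSpace ℝ (Fin n)) : ℝ :=
  fderiv ℝ (fun y => pd f j y) x (EuclideanSpace.single i 1)

/-- The Laplacian `Δ f`. -/
noncomputable def lap {n : ℕ} (f : EuclideanSpace ℝ (Fin n) → ℝ)
    (x : EuclideanSpace ℝ (Fin n)) : ℝ := ∑ i, pd2 f i i x

/-- The infinity-Laplacian `Δ_∞ f = ∑ ∂i f ∂j f ∂i∂j f`. -/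
noncomputable def ilap {n : ℕ} (f : EuclideanSpace ℝ (Fin n) → ℝ)
    (x : EuclideanSpace ℝ (Fin n)) : ℝ := ∑ i, ∑ j, pd f i x * pd f j x * pd2 f i j x

/-- The norm of the gradient `|∇f|`. -/
noncomputable def gradNorm {n : ℕ} (f : EuclideanSpace ℝ (Fin n) → ℝ)
    (x : EuclideanSpace ℝ (Fin n)) : ℝ := Real.sqrt (∑ i, (pd f i x) ^ 2)

/-- `|x'|`: the norm of the first `n - m` coordinates of `x`. -/
noncomputable def normP (n m : ℕ) (x : EuclideanSpace ℝ (Fin n)) : ℝ :=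
  Real.sqrt (∑ i : Fin n, if (i : ℕ) < n - m then (x i) ^ 2 else 0)

/-- `|x''|`: the norm of the last `m` coordinates of `x`. -/
noncomputable def normS (n m : ℕ) (x : EuclideanSpace ℝ (Fin n)) : ℝ :=
  Real.sqrt (∑ i : Fin n, if (i : ℕ) < n - m then 0 else (x i) ^ 2)

/-!
Write `Q = |x'|²` and `S = |x''|²`. A function of the form `u = F(Q, S)` has `∂ᵢu = 2xᵢF_Q` or
`2xᵢF_S`, so `Δu`, `|∇u|²` and `Δ_∞u` are explicit polynomials in `Q`, `S`, `n - m`, `m` and the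
partial derivatives of `F`. For `F(q, σ) = (1 - σ) q^{β/2} + q^{1/2}` and `R = |x'|`, the
quantity `R (p - 2) (Δu |∇u|² / (p - 2) + Δ_∞u)` becomes a polynomial in `R`, `σ`, `P = R^β` and
`a = β (1 - σ) R^{β-1} ≥ 0`. The choice of `β` (the exponent for which `|x'|^β` is `p`-harmonic in
`x'`) kills its term in `a (a + 1)²`; what is left is at least `(n - m - 1)(a + 1)²` minus terms
carrying a factor `R`, hence nonnegative once `16 (m + p - 2) R ≤ n - m - 1`.
-/

open Topology

section SqNormOn

variable {n : ℕ} (s : Finset (Fin n))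

noncomputable def sqNormOn (x : EuclideanSpace ℝ (Fin n)) : ℝ := ∑ i ∈ s, x i ^ 2

noncomputable def gradSqNormOn (x : EuclideanSpace ℝ (Fin n)) :
    EuclideanSpace ℝ (Fin n) →L[ℝ] ℝ :=
  ∑ i ∈ s, (2 * x i) • EuclideanSpace.proj i

theorem sqNormOn_nonneg (x : EuclideanSpace ℝ (Fin n)) : 0 ≤ sqNormOn s x :=
  Finset.sum_nonneg fun _ _ => sq_nonneg _

theorem continuous_sqNormOn : Continuous (sqNormOn s) :=
  continuous_finsetSum _ fun i _ => ((EuclideanSpace.proj (𝕜 := ℝ) i).continuous).pow 2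

theorem hasFDerivAt_sqNormOn (x : EuclideanSpace ℝ (Fin n)) :
    HasFDerivAt (sqNormOn s) (gradSqNormOn s x) x := by
  refine HasFDerivAt.fun_sum fun i _ => ?_
  refine (((EuclideanSpace.proj (𝕜 := ℝ) i).hasFDerivAt (x := x)).pow 2).congr_fderiv ?_
  simp

theorem gradSqNormOn_single (x : EuclideanSpace ℝ (Fin n)) (j : Fin n) :
    gradSqNormOn s x (EuclideanSpace.single j 1) = if j ∈ s then 2 * x j else 0 := by
  simp [gradSqNormOn, PiLp.single_apply]

theorem sum_ite_mem_mul_sq (f g : ℝ) (x : EuclideanSpace ℝ (Fin n)) :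
    ∑ i, (if i ∈ s then f else g) * x i ^ 2 = f * sqNormOn s x + g * sqNormOn sᶜ x := by
  rw [← Finset.sum_add_sum_compl s, sqNormOn, sqNormOn, Finset.mul_sum, Finset.mul_sum]
  congr 1 <;> refine Finset.sum_congr rfl fun i hi => ?_
  · rw [if_pos hi]
  · rw [if_neg (Finset.mem_compl.mp hi)]

theorem sum_ite_mem (f g : ℝ) :
    ∑ i : Fin n, (if i ∈ s then f else g) = s.card * f + sᶜ.card * g := by
  rw [Finset.sum_ite]
  simp [Finset.filter_not, Finset.compl_eq_univ_sdiff]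

end SqNormOn

/- A hypothesis `HasFDerivAt u (a • gradSqNormOn s x + b • gradSqNormOn sᶜ x) x` says that `u`
behaves like `F(Q, S)` with `F_Q = a` and `F_S = b`; in the same way `aQ, aS, bQ, bS` stand for
the second derivatives `F_QQ, F_QS, F_SQ, F_SS`. -/
section FunctionsOfSqNorms

variable {n : ℕ} (s : Finset (Fin n)) {u a b : EuclideanSpace ℝ (Fin n) → ℝ}
  {x : EuclideanSpace ℝ (Fin n)}

theorem pd_eq_of_hasFDerivAt {a b : ℝ}
    (hu : HasFDerivAt u (a • gradSqNormOn s x + b • gradSqNormOn sᶜ x) x) (j : Fin n) :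
    pd u j x = 2 * x j * if j ∈ s then a else b := by
  rw [pd, hu.fderiv]
  by_cases hj : j ∈ s <;> simp [gradSqNormOn_single, hj] <;> ring

theorem pd2_eq_of_eventually_pd_eq {c : EuclideanSpace ℝ (Fin n) → ℝ} {cQ cS : ℝ} {j : Fin n}
    (hu : ∀ᶠ y in 𝓝 x, pd u j y = 2 * y j * c y)
    (hc : HasFDerivAt c (cQ • gradSqNormOn s x + cS • gradSqNormOn sᶜ x) x) (i : Fin n) :
    pd2 u i j x
      = (if i = j then 2 * c x else 0) + 4 * x i * x j * if i ∈ s then cQ else cS := by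
  have hcoord : HasFDerivAt (fun y : EuclideanSpace ℝ (Fin n) => 2 * y j)
      ((2 : ℝ) • EuclideanSpace.proj (𝕜 := ℝ) j) x :=
    ((EuclideanSpace.proj (𝕜 := ℝ) j).hasFDerivAt (x := x)).const_smul (2 : ℝ)
  rw [pd2, Filter.EventuallyEq.fderiv_eq hu, (hcoord.fun_mul hc).fderiv]
  rcases eq_or_ne i j with rfl | hij <;> by_cases hi : i ∈ s <;>
    simp [gradSqNormOn_single, Ne.symm, *] <;> ring

theorem pd2_eq_of_hasFDerivAt {aQ aS bQ bS : ℝ}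
    (hu : ∀ᶠ y in 𝓝 x, HasFDerivAt u (a y • gradSqNormOn s y + b y • gradSqNormOn sᶜ y) y)
    (ha : HasFDerivAt a (aQ • gradSqNormOn s x + aS • gradSqNormOn sᶜ x) x)
    (hb : HasFDerivAt b (bQ • gradSqNormOn s x + bS • gradSqNormOn sᶜ x) x) (i j : Fin n) :
    pd2 u i j x = (if i = j then 2 * (if j ∈ s then a x else b x) else 0)
      + 4 * x i * x j
        * if j ∈ s then (if i ∈ s then aQ else aS) else (if i ∈ s then bQ else bS) := by
  have hpd : ∀ᶠ y in 𝓝 x, pd u j y = 2 * y j * if j ∈ s then a y else b y :=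
    hu.mono fun y hy => pd_eq_of_hasFDerivAt s hy j
  by_cases hj : j ∈ s
  · simp only [hj, if_true] at hpd ⊢
    exact pd2_eq_of_eventually_pd_eq s hpd ha i
  · simp only [hj, if_false] at hpd ⊢
    exact pd2_eq_of_eventually_pd_eq s hpd hb i

theorem lap_eq_of_hasFDerivAt {aQ aS bQ bS : ℝ}
    (hu : ∀ᶠ y in 𝓝 x, HasFDerivAt u (a y • gradSqNormOn s y + b y • gradSqNormOn sᶜ y) y)
    (ha : HasFDerivAt a (aQ • gradSqNormOn s x + aS • gradSqNormOn sᶜ x) x)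
    (hb : HasFDerivAt b (bQ • gradSqNormOn s x + bS • gradSqNormOn sᶜ x) x) :
    lap u x = 2 * s.card * a x + 2 * sᶜ.card * b x + 4 * aQ * sqNormOn s x
      + 4 * bS * sqNormOn sᶜ x := by
  have hii : ∀ i, pd2 u i i x
      = (if i ∈ s then 2 * a x else 2 * b x) + (if i ∈ s then 4 * aQ else 4 * bS) * x i ^ 2 := by
    intro i
    rw [pd2_eq_of_hasFDerivAt s hu ha hb, if_pos rfl]
    split_ifs <;> ring
  rw [lap, Finset.sum_congr rfl fun i _ => hii i, Finset.sum_add_distrib, sum_ite_mem,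
    sum_ite_mem_mul_sq]
  ring

theorem gradNorm_sq_eq_of_hasFDerivAt {a b : ℝ}
    (hu : HasFDerivAt u (a • gradSqNormOn s x + b • gradSqNormOn sᶜ x) x) :
    gradNorm u x ^ 2 = 4 * a ^ 2 * sqNormOn s x + 4 * b ^ 2 * sqNormOn sᶜ x := by
  have hi : ∀ i, pd u i x ^ 2 = (if i ∈ s then 4 * a ^ 2 else 4 * b ^ 2) * x i ^ 2 := by
    intro i
    rw [pd_eq_of_hasFDerivAt s hu]
    split_ifs <;> ring
  rw [gradNorm, Real.sq_sqrt (Finset.sum_nonneg fun i _ => sq_nonneg _),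
    Finset.sum_congr rfl fun i _ => hi i, sum_ite_mem_mul_sq]

theorem ilap_eq_of_hasFDerivAt {aQ aS bQ bS : ℝ}
    (hu : ∀ᶠ y in 𝓝 x, HasFDerivAt u (a y • gradSqNormOn s y + b y • gradSqNormOn sᶜ y) y)
    (ha : HasFDerivAt a (aQ • gradSqNormOn s x + aS • gradSqNormOn sᶜ x) x)
    (hb : HasFDerivAt b (bQ • gradSqNormOn s x + bS • gradSqNormOn sᶜ x) x) :
    ilap u x = 8 * (a x ^ 3 * sqNormOn s x + b x ^ 3 * sqNormOn sᶜ x)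
      + 16 * (a x ^ 2 * aQ * sqNormOn s x ^ 2 + a x * b x * (aS + bQ) * sqNormOn s x * sqNormOn sᶜ x
        + b x ^ 2 * bS * sqNormOn sᶜ x ^ 2) := by
  set Q := sqNormOn s x
  set S := sqNormOn sᶜ x
  have hpd : ∀ i, pd u i x = 2 * x i * if i ∈ s then a x else b x :=
    pd_eq_of_hasFDerivAt s hu.self_of_nhds
  have hrow : ∀ i, ∑ j, pd u i x * pd u j x * pd2 u i j x
      = (if i ∈ s then 8 * a x ^ 3 + 16 * a x * (a x * aQ * Q + b x * bQ * S)
          else 8 * b x ^ 3 + 16 * b x * (a x * aS * Q + b x * bS * S)) * x i ^ 2 := by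
    intro i
    have hterm : ∀ j, pd u i x * pd u j x * pd2 u i j x
        = (if i = j then 8 * (if i ∈ s then a x ^ 3 else b x ^ 3) * x i ^ 2 else 0)
          + 16 * x i ^ 2 * (if i ∈ s then a x else b x)
            * ((if j ∈ s then a x * (if i ∈ s then aQ else aS)
                else b x * (if i ∈ s then bQ else bS)) * x j ^ 2) := by
      intro j
      rw [hpd, hpd, pd2_eq_of_hasFDerivAt s hu ha hb]
      rcases eq_or_ne i j with rfl | hij
      · split_ifs <;> ring
      · simp only [hij, if_false]
        split_ifs <;> ring
    rw [Finset.sum_congr rfl fun j _ => hterm j, Finset.sum_add_distrib, Finset.sum_ite_eq,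
      ← Finset.mul_sum, sum_ite_mem_mul_sq]
    simp only [Finset.mem_univ, if_true]
    split_ifs <;> ring
  rw [ilap, Finset.sum_congr rfl fun i _ => hrow i, sum_ite_mem_mul_sq]
  ring

end FunctionsOfSqNorms

/- `profileDQ`, `profileDS`, `profileDQQ`, `profileDQS` are the partial derivatives of `profile` in
`q` and `σ`; the one in `σσ` vanishes. -/
noncomputable def profile (c d q σ : ℝ) : ℝ := (1 - σ) * q ^ c + q ^ d

noncomputable def profileDQ (c d q σ : ℝ) : ℝ := (1 - σ) * (c * q ^ (c - 1)) + d * q ^ (d - 1)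

noncomputable def profileDS (c q : ℝ) : ℝ := -q ^ c

noncomputable def profileDQQ (c d q σ : ℝ) : ℝ :=
  (1 - σ) * (c * ((c - 1) * q ^ (c - 2))) + d * ((d - 1) * q ^ (d - 2))

noncomputable def profileDQS (c q : ℝ) : ℝ := -(c * q ^ (c - 1))

section ProfileDerivatives

variable {n : ℕ} (s : Finset (Fin n)) {x : EuclideanSpace ℝ (Fin n)}

theorem hasFDerivAt_rpow_sqNormOn (r : ℝ) (hx : 0 < sqNormOn s x) :
    HasFDerivAt (fun y => sqNormOn s y ^ r)
      ((r * sqNormOn s x ^ (r - 1)) • gradSqNormOn s x) x :=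
  (Real.hasDerivAt_rpow_const (Or.inl hx.ne')).comp_hasFDerivAt x (hasFDerivAt_sqNormOn s x)

theorem hasFDerivAt_profile (c d : ℝ) (hx : 0 < sqNormOn s x) :
    HasFDerivAt (fun y => profile c d (sqNormOn s y) (sqNormOn sᶜ y))
      (profileDQ c d (sqNormOn s x) (sqNormOn sᶜ x) • gradSqNormOn s x
        + profileDS c (sqNormOn s x) • gradSqNormOn sᶜ x) x := by
  have h := (((hasFDerivAt_sqNormOn sᶜ x).const_sub 1).mul
    (hasFDerivAt_rpow_sqNormOn s c hx)).add (hasFDerivAt_rpow_sqNormOn s d hx)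
  refine h.congr_fderiv ?_
  ext v
  simp only [profileDQ, profileDS, add_apply, smul_apply, neg_apply, smul_eq_mul]
  ring

theorem hasFDerivAt_profileDQ (c d : ℝ) (hx : 0 < sqNormOn s x) :
    HasFDerivAt (fun y => profileDQ c d (sqNormOn s y) (sqNormOn sᶜ y))
      (profileDQQ c d (sqNormOn s x) (sqNormOn sᶜ x) • gradSqNormOn s x
        + profileDQS c (sqNormOn s x) • gradSqNormOn sᶜ x) x := by
  have h := (((hasFDerivAt_sqNormOn sᶜ x).const_sub 1).mul
    ((hasFDerivAt_rpow_sqNormOn s (c - 1) hx).const_mul c)).add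
    ((hasFDerivAt_rpow_sqNormOn s (d - 1) hx).const_mul d)
  refine h.congr_fderiv ?_
  ext v
  simp only [profileDQQ, profileDQS, add_apply, smul_apply, neg_apply, smul_eq_mul,
    show c - 1 - 1 = c - 2 by ring, show d - 1 - 1 = d - 2 by ring]
  ring

theorem hasFDerivAt_profileDS (c : ℝ) (hx : 0 < sqNormOn s x) :
    HasFDerivAt (fun y => profileDS c (sqNormOn s y))
      (profileDQS c (sqNormOn s x) • gradSqNormOn s x + (0 : ℝ) • gradSqNormOn sᶜ x) x := by
  refine (hasFDerivAt_rpow_sqNormOn s c hx).neg.congr_fderiv ?_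
  rw [zero_smul, add_zero, profileDQS]
  module

end ProfileDerivatives

theorem sq_rpow_half_sub {R : ℝ} (hR : 0 < R) (e r : ℝ) :
    (R ^ 2) ^ (e / 2 - r) = R ^ e / R ^ (2 * r) := by
  rw [← Real.rpow_natCast R 2, ← Real.rpow_mul hR.le, ← Real.rpow_sub hR]
  norm_num
  ring_nf

theorem profile_derivs_at_sq {R : ℝ} (hR : 0 < R) (β σ : ℝ) :
    profileDQ (β / 2) (1 / 2) (R ^ 2) σ = (β * (1 - σ) * R ^ β / R + 1) / (2 * R) ∧
    profileDS (β / 2) (R ^ 2) = -R ^ β ∧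
    profileDQQ (β / 2) (1 / 2) (R ^ 2) σ
      = ((β - 2) * (β * (1 - σ) * R ^ β / R) - 1) / (4 * R ^ 3) ∧
    profileDQS (β / 2) (R ^ 2) = -(β * R ^ β) / (2 * R ^ 2) := by
  have h0 : ∀ e : ℝ, (R ^ 2) ^ (e / 2) = R ^ e := fun e => by
    simpa using sq_rpow_half_sub hR e 0
  have h1 : ∀ e : ℝ, (R ^ 2) ^ (e / 2 - 1) = R ^ e / R ^ 2 := fun e => by
    simpa using sq_rpow_half_sub hR e 1
  have h2 : ∀ e : ℝ, (R ^ 2) ^ (e / 2 - 2) = R ^ e / R ^ 4 := fun e => by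
    rw [sq_rpow_half_sub hR]; norm_num
  refine ⟨?_, ?_, ?_, ?_⟩ <;>
    simp only [profileDQ, profileDS, profileDQQ, profileDQS, h0, h1, h2, Real.rpow_one]
  · field_simp
  · field_simp
    ring
  · field_simp

section Inequality

variable {K M p β R σ P a : ℝ}

theorem combination_numerator_nonneg (hK : 2 ≤ K) (hM : 0 ≤ M) (hp : 2 < p) (hβ : 0 < β)
    (hR : 0 < R) (hRδ : 16 * (M + p - 2) * R ≤ K - 1) (hσ0 : 0 ≤ σ) (hσ1 : σ ≤ 1)
    (hP0 : 0 < P) (hP1 : P ≤ 1) (ha : 0 ≤ a) :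
    0 ≤ (a + 1) ^ 2 * (K - 1 - 2 * M * (P * R)) + 4 * σ * P ^ 2 * ((β + K - 2) * a + (K - 1))
      + 8 * β * (p - 2) * σ * P ^ 2 * (a + 1) - 8 * (M + p - 2) * (σ * (P ^ 3 * R)) := by
  have hPR : P * R ≤ R := mul_le_of_le_one_left hR.le hP1
  have hσPR : σ * (P ^ 3 * R) ≤ R :=
    mul_le_of_le_one_left (by positivity) hσ1 |>.trans
      (mul_le_of_le_one_left hR.le (pow_le_one₀ hP0.le hP1))
  have hMPR : 16 * M * (P * R) ≤ K - 1 := by nlinarith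
  have hfirst : 7 / 8 * (K - 1) ≤ (a + 1) ^ 2 * (K - 1 - 2 * M * (P * R)) := by
    have hsq : 1 ≤ (a + 1) ^ 2 := by nlinarith
    nlinarith
  have hmid : 0 ≤ 4 * σ * P ^ 2 * ((β + K - 2) * a + (K - 1)) := by
    have : 0 ≤ (β + K - 2) * a := mul_nonneg (by linarith) ha
    have : 0 ≤ 4 * σ * P ^ 2 := by positivity
    nlinarith
  have hmid' : 0 ≤ 8 * β * (p - 2) * σ * P ^ 2 * (a + 1) := by
    have : 0 ≤ p - 2 := by linarith
    positivity
  have hlast : 8 * (M + p - 2) * (σ * (P ^ 3 * R)) ≤ (K - 1) / 2 := by nlinarith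
  linarith

theorem pLaplace_combination_nonneg {A B W V : ℝ} (hK : 2 ≤ K) (hM : 0 ≤ M) (hp : 2 < p)
    (hβp : β * (p - 1) = p - K) (hβ : 0 < β) (hR : 0 < R) (hRδ : 16 * (M + p - 2) * R ≤ K - 1)
    (hσ0 : 0 ≤ σ) (hσ1 : σ ≤ 1) (hP0 : 0 < P) (hP1 : P ≤ 1) (ha : 0 ≤ a)
    (hA : A = (a + 1) / (2 * R)) (hB : B = -P) (hW : W = ((β - 2) * a - 1) / (4 * R ^ 3))
    (hV : V = -(β * P) / (2 * R ^ 2)) :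
    0 ≤ (2 * K * A + 2 * M * B + 4 * W * R ^ 2) * (4 * A ^ 2 * R ^ 2 + 4 * B ^ 2 * σ) / (p - 2)
      + (8 * (A ^ 3 * R ^ 2 + B ^ 3 * σ)
        + 16 * (A ^ 2 * W * R ^ 4 + 2 * A * B * V * R ^ 2 * σ)) := by
  have hp2 : 0 < p - 2 := by linarith
  have hzero : (β + K - 2) + (p - 2) * (β - 1) = 0 := by linear_combination hβp
  have hid : (2 * K * A + 2 * M * B + 4 * W * R ^ 2) * (4 * A ^ 2 * R ^ 2 + 4 * B ^ 2 * σ) / (p - 2)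
      + (8 * (A ^ 3 * R ^ 2 + B ^ 3 * σ)
        + 16 * (A ^ 2 * W * R ^ 4 + 2 * A * B * V * R ^ 2 * σ))
      = ((a + 1) ^ 2 * (K - 1 - 2 * M * (P * R)) + 4 * σ * P ^ 2 * ((β + K - 2) * a + (K - 1))
          + 8 * β * (p - 2) * σ * P ^ 2 * (a + 1) - 8 * (M + p - 2) * (σ * (P ^ 3 * R))
          + ((β + K - 2) + (p - 2) * (β - 1)) * (a * (a + 1) ^ 2)) / (R * (p - 2)) := by
    subst hA hB hW hV
    field_simp
    ring
  rw [hid, hzero, zero_mul, add_zero]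
  exact div_nonneg (combination_numerator_nonneg hK hM hp hβ hR hRδ hσ0 hσ1 hP0 hP1 ha) (by positivity)

end Inequality

theorem pLaplace_combination_profile_nonneg {n : ℕ} (s : Finset (Fin n)) {p β : ℝ}
    {u : EuclideanSpace ℝ (Fin n) → ℝ} {x : EuclideanSpace ℝ (Fin n)}
    (hu : u = fun y => profile (β / 2) (1 / 2) (sqNormOn s y) (sqNormOn sᶜ y))
    (hK : 2 ≤ s.card) (hp : 2 < p) (hβp : β * (p - 1) = p - s.card) (hβ : 0 < β)
    (hx : 0 < sqNormOn s x) (hσ : sqNormOn sᶜ x ≤ 1) (hR1 : √(sqNormOn s x) ≤ 1)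
    (hRδ : 16 * (sᶜ.card + p - 2) * √(sqNormOn s x) ≤ s.card - 1) :
    0 ≤ lap u x * gradNorm u x ^ 2 / (p - 2) + ilap u x := by
  have hdu : ∀ᶠ y in 𝓝 x, HasFDerivAt u
      (profileDQ (β / 2) (1 / 2) (sqNormOn s y) (sqNormOn sᶜ y) • gradSqNormOn s y
        + profileDS (β / 2) (sqNormOn s y) • gradSqNormOn sᶜ y) y :=
    Filter.eventually_of_mem ((isOpen_lt continuous_const (continuous_sqNormOn s)).mem_nhds hx)
      fun y hy => hu ▸ hasFDerivAt_profile s _ _ hy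
  have hdA := hasFDerivAt_profileDQ s (β / 2) (1 / 2) hx
  have hdB := hasFDerivAt_profileDS s (β / 2) hx
  rw [lap_eq_of_hasFDerivAt s hdu hdA hdB, gradNorm_sq_eq_of_hasFDerivAt s hdu.self_of_nhds,
    ilap_eq_of_hasFDerivAt s hdu hdA hdB]
  set R := √(sqNormOn s x)
  have hR : 0 < R := Real.sqrt_pos.mpr hx
  rw [← Real.sq_sqrt (sqNormOn_nonneg s x)]
  obtain ⟨hA, hB, hW, hV⟩ := profile_derivs_at_sq hR β (sqNormOn sᶜ x)
  have ha : 0 ≤ β * (1 - sqNormOn sᶜ x) * R ^ β / R := by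
    have := sub_nonneg.mpr hσ
    positivity
  convert pLaplace_combination_nonneg (by exact_mod_cast hK) (Nat.cast_nonneg _) hp hβp hβ hR hRδ
    (sqNormOn_nonneg sᶜ x) hσ (Real.rpow_pos_of_pos hR β) (Real.rpow_le_one hR.le hR1 hβ.le) ha
    hA hB hW hV using 2 <;> ring

theorem normP_eq_sqrt_sqNormOn (n m : ℕ) (x : EuclideanSpace ℝ (Fin n)) :
    normP n m x = √(sqNormOn (Finset.univ.filter fun i : Fin n => (i : ℕ) < n - m) x) := by
  rw [normP, sqNormOn, Finset.sum_filter]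

theorem normS_eq_sqrt_sqNormOn (n m : ℕ) (x : EuclideanSpace ℝ (Fin n)) :
    normS n m x = √(sqNormOn (Finset.univ.filter fun i : Fin n => (i : ℕ) < n - m)ᶜ x) := by
  rw [normS, sqNormOn, Finset.compl_filter, Finset.sum_filter]
  simp only [ite_not]

theorem statement8_general (n m : ℕ) (hm1 : 1 ≤ m) (hm2 : m ≤ n - 2)
    (p : ℝ) (hp : (n : ℝ) - m < p) (hp2 : 2 < p)
    (β : ℝ) (hβ : β = (p - n + m) / (p - 1))
    (u : EuclideanSpace ℝ (Fin n) → ℝ)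
    (hu : ∀ x, u x = (1 - (normS n m x) ^ 2) * normP n m x ^ β + normP n m x) :
    ∃ δc : ℝ, 0 < δc ∧ δc < 1 ∧
      ∀ x : EuclideanSpace ℝ (Fin n), normS n m x < 1 → 0 < normP n m x → normP n m x < δc →
        0 ≤ lap u x * gradNorm u x ^ 2 / (p - 2) + ilap u x := by
  set s := Finset.univ.filter fun i : Fin n => (i : ℕ) < n - m with hs
  have hcard : s.card = n - m := by rw [hs, Fin.card_filter_val_lt]; omega
  have hK : (s.card : ℝ) = n - m := by rw [hcard, Nat.cast_sub (by omega)]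
  have hM : sᶜ.card = m := by rw [Finset.card_compl, hcard, Fintype.card_fin]; omega
  have hK2 : (2 : ℝ) ≤ n - m := by rw [← hK]; exact_mod_cast (show 2 ≤ s.card by omega)
  have hm : (1 : ℝ) ≤ m := by exact_mod_cast hm1
  have hprofile : u = fun y => profile (β / 2) (1 / 2) (sqNormOn s y) (sqNormOn sᶜ y) := by
    funext y
    rw [hu, normP_eq_sqrt_sqNormOn, normS_eq_sqrt_sqNormOn, ← hs,
      Real.sq_sqrt (sqNormOn_nonneg _ _), Real.sqrt_eq_rpow,
      ← Real.rpow_mul (sqNormOn_nonneg _ _), profile]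
    ring_nf
  have hβ0 : 0 < β := hβ ▸ div_pos (by linarith) (by linarith)
  have hδ : 0 < 16 * (m + p - 2) := by linarith
  have hδ1 : (n - m - 1) / (16 * (m + p - 2)) < 1 := (div_lt_one hδ).mpr (by linarith)
  refine ⟨_, div_pos (by linarith) hδ, hδ1, fun x hσ hR hRδ => ?_⟩
  rw [normP_eq_sqrt_sqNormOn, ← hs] at hR hRδ
  rw [normS_eq_sqrt_sqNormOn, ← hs] at hσ
  refine pLaplace_combination_profile_nonneg s hprofile (by omega) hp2 ?_ hβ0
    (Real.sqrt_pos.mp hR) (by simpa using ((Real.sqrt_lt' one_pos).mp hσ).le)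
    (hRδ.trans hδ1).le ?_
  · rw [hβ, hK, div_mul_cancel₀ _ (by linarith)]
    ring
  · rw [hM, hK, mul_comm]
    exact (le_div_iff₀ hδ).mp hRδ.le

/-- existence of `δ_c ∈ (0,1)` such that
`ǔ = (1 - |x''|²)|x'|^β + |x'|` satisfies `Δǔ |∇ǔ|²/(p-2) + Δ_∞ ǔ ≥ 0`
on `{x : |x''| < 1, 0 < |x'| < δ_c}`. -/
theorem statement8 (n m : ℕ) (hm1 : 1 ≤ m) (hm2 : m ≤ n - 2) (hn : 2 ≤ n)
    (p : ℝ) (hp : (n : ℝ) - m < p) (hp2 : 2 < p)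
    (β : ℝ) (hβ : β = (p - n + m) / (p - 1))
    (u : EuclideanSpace ℝ (Fin n) → ℝ)
    (hu : ∀ x, u x = (1 - (normS n m x) ^ 2) * normP n m x ^ β + normP n m x) :
    ∃ δc : ℝ, 0 < δc ∧ δc < 1 ∧
      ∀ x : EuclideanSpace ℝ (Fin n), normS n m x < 1 → 0 < normP n m x → normP n m x < δc →
        0 ≤ lap u x * gradNorm u x ^ 2 / (p - 2) + ilap u x :=
  statement8_general n m hm1 hm2 p hp hp2 β hβ u hu
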